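/- Let n ≥ 1, let a : Fin n → ℝ, let i : Fin n and δ > 0, and suppose a i ≥ a j + δ for every j ≠ i. Then for every c > 0 the softmax weight at index i with temperature c satisfies exp(c·a i) / (∑ j, exp(c·a j)) ≥ exp(c·δ) / (exp(c·δ) + (n − 1)). -/

import Mathlib

/-! Each competing term `exp (c * a j)` is at most `exp (c * a i - c * δ)`, so the partition
function is at most `exp (c * a i) * (1 + (n - 1) * exp (-(c * δ)))`; dividing through by
`exp (c * a i - c * δ)` gives the bound. -/

open Finset Real

section Margin

variable {ι : Type*} [Fintype ι] [DecidableEq ι]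

theorem sum_le_add_card_sub_one_mul_of_le {w : ι → ℝ} {i : ι} {q : ℝ}
    (hw : ∀ j, j ≠ i → w j ≤ q) :
    ∑ j, w j ≤ w i + ((Fintype.card ι : ℝ) - 1) * q := by
  have hcard : ((univ.erase i).card : ℝ) = (Fintype.card ι : ℝ) - 1 := by
    rw [card_erase_of_mem (mem_univ i), card_univ,
      Nat.cast_sub (Fintype.card_pos_iff.mpr ⟨i⟩), Nat.cast_one]
  rw [← add_sum_erase _ _ (mem_univ i), ← hcard, ← nsmul_eq_mul]
  gcongr
  exact sum_le_card_nsmul _ _ _ fun j hj => hw j (ne_of_mem_erase hj)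

theorem sum_exp_le_of_margin {x : ι → ℝ} {i : ι} {d : ℝ} (hx : ∀ j, j ≠ i → x j + d ≤ x i) :
    ∑ j, exp (x j) ≤ exp (x i) + ((Fintype.card ι : ℝ) - 1) * exp (x i - d) :=
  sum_le_add_card_sub_one_mul_of_le fun j hj => exp_le_exp.mpr (by linarith [hx j hj])

theorem exp_div_sum_exp_ge_of_margin {x : ι → ℝ} {i : ι} {d : ℝ}
    (hx : ∀ j, j ≠ i → x j + d ≤ x i) :
    exp d / (exp d + ((Fintype.card ι : ℝ) - 1)) ≤ exp (x i) / ∑ j, exp (x j) := by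
  have hsum_pos : 0 < ∑ j, exp (x j) := sum_pos (fun j _ => exp_pos _) ⟨i, mem_univ i⟩
  have hscale : exp d / (exp d + ((Fintype.card ι : ℝ) - 1)) =
      exp (x i) / (exp (x i) + ((Fintype.card ι : ℝ) - 1) * exp (x i - d)) := by
    rw [← mul_div_mul_right _ _ (exp_pos (x i - d)).ne', add_mul, ← exp_add, add_sub_cancel]
  rw [hscale]
  exact div_le_div_of_nonneg_left (exp_pos _).le hsum_pos (sum_exp_le_of_margin hx)

end Margin

theorem softmax_dominant_lower_bound_general (n : ℕ) (a : Fin n → ℝ) (i : Fin n)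
    (δ : ℝ) (hdom : ∀ j : Fin n, j ≠ i → a i ≥ a j + δ)
    (c : ℝ) (hc : 0 < c) :
    Real.exp (c * a i) / (∑ j : Fin n, Real.exp (c * a j)) ≥
      Real.exp (c * δ) / (Real.exp (c * δ) + ((n : ℝ) - 1)) := by
  have hmargin : ∀ j, j ≠ i → c * a j + c * δ ≤ c * a i := fun j hj => by
    rw [← mul_add]
    exact mul_le_mul_of_nonneg_left (hdom j hj) hc.le
  simpa using exp_div_sum_exp_ge_of_margin hmargin

/-- Softmax weight lower bound for a δ-dominant score (quantitative hard selection). -/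
theorem softmax_dominant_lower_bound (n : ℕ) (hn : 1 ≤ n) (a : Fin n → ℝ) (i : Fin n)
    (δ : ℝ) (hδ : 0 < δ) (hdom : ∀ j : Fin n, j ≠ i → a i ≥ a j + δ)
    (c : ℝ) (hc : 0 < c) :
    Real.exp (c * a i) / (∑ j : Fin n, Real.exp (c * a j)) ≥
      Real.exp (c * δ) / (Real.exp (c * δ) + ((n : ℝ) - 1)) :=
  softmax_dominant_lower_bound_general n a i δ hdom c hc
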